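/- Let (X_1, Y_1), …, (X_{n+1}, Y_{n+1}) be random pairs with X_i taking values in ℝ^d and Y_i in ℝ, whose joint distribution is exchangeable, i.e., invariant under every permutation of the indices {1, …, n+1}. Let ρ : ℝ^d × ℝ → ℝ be a measurable function, set R_i = ρ(X_i, Y_i) for each i, let 0 < α < 1 satisfy ⌈(1−α)(n+1)⌉ ≤ n, and let r̂ = R_{(⌈(1−α)(n+1)⌉)} be the ⌈(1−α)(n+1)⌉-th order statistic of R_1, …, R_n. Then Pr(Y_{n+1} ∈ C(X_{n+1})) ≥ 1 − α, where for x ∈ ℝ^d the set C(x) is defined as C(x) = {y ∈ ℝ : ρ(x, y) ≤ r̂}. -/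

import Mathlib

/-!
Call an index `j` *high* if at least `k = ⌈(1-α)(n+1)⌉` of the scores `R_1, …, R_{n+1}` lie
strictly below `R_j`; the new point is miscovered exactly when `n+1` is high. In every
configuration of scores at most `n+1-k` indices are high, so the probabilities of the `n+1`
events "`j` is high" add up to at most `n+1-k`. By exchangeability these probabilities are all
equal, hence each is at most `(n+1-k)/(n+1) ≤ α`.
-/

open MeasureTheory

/-- The `k`-th order statistic (1-based, counted with multiplicity) of the values
`v 0, …, v (m-1)`: the `k`-th smallest element of the list sorted in nondecreasing
order, with junk value `0` when `k` is out of range. -/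
noncomputable def orderStat {m : ℕ} (v : Fin m → ℝ) (k : ℕ) : ℝ :=
  (List.insertionSort (· ≤ ·) (List.ofFn v)).getD (k - 1) 0

open Finset
open scoped ENNReal

theorem List.insertionSort_ofFn {α : Type*} [LinearOrder α] {m : ℕ} (v : Fin m → α) :
    (List.ofFn v).insertionSort (· ≤ ·) = List.ofFn (v ∘ Tuple.sort v) :=
  List.Perm.eq_of_sortedLE List.sortedLE_insertionSort (Tuple.monotone_sort v).sortedLE_ofFn
    ((List.perm_insertionSort _ _).trans ((Tuple.sort v).ofFn_comp_perm v).symm)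

theorem orderStat_eq_apply_sort {m : ℕ} (v : Fin m → ℝ) (j : Fin m) :
    orderStat v (j + 1) = v (Tuple.sort v j) := by
  simp [orderStat, List.insertionSort_ofFn]

theorem le_orderStat_iff {m : ℕ} (v : Fin m → ℝ) {k : ℕ} (hk₀ : 0 < k) (hkm : k ≤ m)
    (r : ℝ) :
    r ≤ orderStat v k ↔ #{i | v i < r} < k := by
  obtain ⟨j, rfl⟩ : ∃ j : Fin m, (j : ℕ) + 1 = k :=
    ⟨⟨k - 1, by omega⟩, by simp; omega⟩
  have hsorted := Tuple.lt_card_lt_iff_apply_lt_of_monotone (a := r) (j := j)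
    (Tuple.monotone_sort v)
  have hcard : #{i | (v ∘ Tuple.sort v) i < r} = #{i | v i < r} :=
    card_equiv (Tuple.sort v) (by simp)
  rw [orderStat_eq_apply_sort, Nat.lt_succ_iff, ← not_lt, ← not_lt, ← hcard]
  exact not_congr hsorted.symm

def strictRank {ι α : Type*} [Fintype ι] [LinearOrder α] (v : ι → α) (j : ι) : ℕ :=
  #{i | v i < v j}

section strictRank

variable {ι α : Type*} [Fintype ι] [LinearOrder α]

theorem card_le_strictRank_le (v : ι → α) (k : ℕ) :
    #{j | k ≤ strictRank v j} ≤ Fintype.card ι - k := by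
  classical
  set A : Finset ι := {j | k ≤ strictRank v j}
  obtain hA | hA := A.eq_empty_or_nonempty
  · simp [hA]
  obtain ⟨j₀, hj₀A, hj₀min⟩ := A.exists_min_image v hA
  -- Entries below the least value on `A` lie outside `A`, and there are at least `k` of them.
  have hsub : A ⊆ ({i | v i < v j₀} : Finset ι)ᶜ := fun i hiA => by
    simpa using hj₀min i hiA
  have hk : k ≤ #{i | v i < v j₀} := (mem_filter.mp hj₀A).2
  have := card_le_card hsub
  rw [card_compl] at this
  omega

theorem strictRank_comp_perm (v : ι → α) (σ : Equiv.Perm ι) (j : ι) :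
    strictRank (v ∘ σ) j = strictRank v (σ j) :=
  card_equiv σ (by simp)

theorem strictRank_last {n : ℕ} (v : Fin (n + 1) → α) :
    strictRank v (Fin.last n) = #{i : Fin n | v i.castSucc < v (Fin.last n)} := by
  simp only [strictRank, card_filter, Fin.sum_univ_castSucc]
  simp

end strictRank

theorem measurable_card_filter {ι α : Type*} [Fintype ι] [MeasurableSpace α]
    {p : ι → α → Prop} [∀ i, DecidablePred (p i)] (hp : ∀ i, MeasurableSet {a | p i a}) :
    Measurable fun a => #{i | p i a} := by
  simp_rw [card_filter]
  exact Finset.measurable_sum _ fun i _ => Measurable.ite (hp i) measurable_const measurable_const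

open Classical in
theorem sum_measure_le_of_forall_card_le {ι Ω : Type*} [Fintype ι] [MeasurableSpace Ω]
    (μ : Measure Ω) {A : ι → Set Ω} (hA : ∀ j, MeasurableSet (A j)) {N : ℕ}
    (hN : ∀ ω, #{j | ω ∈ A j} ≤ N) :
    ∑ j, μ (A j) ≤ N * μ Set.univ := by
  calc ∑ j, μ (A j) = ∫⁻ ω, ∑ j, (A j).indicator 1 ω ∂μ := by
        rw [lintegral_finsetSum _ fun j _ => measurable_one.indicator (hA j)]
        simp_rw [lintegral_indicator_one (hA _)]
    _ = ∫⁻ ω, (#{j | ω ∈ A j} : ℝ≥0∞) ∂μ := by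
        congr with ω
        rw [card_filter]
        push_cast
        simp only [Set.indicator_apply, Pi.one_apply]
    _ ≤ ∫⁻ _, (N : ℝ≥0∞) ∂μ := lintegral_mono fun ω => Nat.cast_le.mpr (hN ω)
    _ = N * μ Set.univ := lintegral_const _

def Exchangeable {Ω ι β : Type*} [MeasurableSpace Ω] [MeasurableSpace β]
    (P : Measure Ω) (Z : ι → Ω → β) : Prop :=
  ∀ π : Equiv.Perm ι, P.map (fun ω i => Z (π i) ω) = P.map (fun ω i => Z i ω)

namespace Exchangeable

variable {Ω β : Type*} [MeasurableSpace Ω] [MeasurableSpace β] {P : Measure Ω} {s : β → ℝ}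

section

variable {ι : Type*} {Z : ι → Ω → β}

theorem measure_preimage_comp_perm (hZ : Exchangeable P Z) (hZm : ∀ i, Measurable (Z i))
    (π : Equiv.Perm ι) {S : Set (ι → β)} (hS : MeasurableSet S) :
    P {ω | (fun i => Z (π i) ω) ∈ S} = P {ω | (fun i => Z i ω) ∈ S} := by
  have := congrArg (· S) (hZ π)
  rwa [Measure.map_apply (measurable_pi_lambda _ fun i => hZm (π i)) hS,
    Measure.map_apply (measurable_pi_lambda _ hZm) hS] at this

variable [Fintype ι]

theorem measurableSet_le_strictRank (hZm : ∀ i, Measurable (Z i)) (hs : Measurable s)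
    (k : ℕ) (j : ι) : MeasurableSet {ω | k ≤ strictRank (fun i => s (Z i ω)) j} :=
  measurable_card_filter (fun i => measurableSet_lt (hs.comp (hZm i)) (hs.comp (hZm j)))
    measurableSet_Ici

theorem measure_le_strictRank_eq [DecidableEq ι] (hZ : Exchangeable P Z)
    (hZm : ∀ i, Measurable (Z i)) (hs : Measurable s) (k : ℕ) (j j' : ι) :
    P {ω | k ≤ strictRank (fun i => s (Z i ω)) j} =
      P {ω | k ≤ strictRank (fun i => s (Z i ω)) j'} := by
  let S : Set (ι → β) := {z | k ≤ strictRank (fun i => s (z i)) j'}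
  have hS : MeasurableSet S :=
    measurableSet_le_strictRank (Z := fun i (z : ι → β) => z i) measurable_pi_apply hs k j'
  have := hZ.measure_preimage_comp_perm hZm (Equiv.swap j j') hS
  simp only [S, Set.mem_ofPred_eq] at this
  convert this using 4 with ω
  have h := strictRank_comp_perm (fun i => s (Z i ω)) (Equiv.swap j j') j'
  rw [Equiv.swap_apply_right] at h
  rw [← h]
  rfl

theorem card_mul_measure_le_strictRank_le (hZ : Exchangeable P Z)
    (hZm : ∀ i, Measurable (Z i)) (hs : Measurable s) (k : ℕ) (j : ι) :
    Fintype.card ι * P {ω | k ≤ strictRank (fun i => s (Z i ω)) j} ≤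
      (Fintype.card ι - k : ℕ) * P Set.univ := by
  classical
  have hsum := sum_measure_le_of_forall_card_le P
    (fun j => measurableSet_le_strictRank hZm hs k j)
    (fun ω => by convert card_le_strictRank_le (fun i => s (Z i ω)) k; rfl)
  rwa [sum_congr rfl fun j' _ => hZ.measure_le_strictRank_eq hZm hs k j' j, sum_const,
    card_univ, nsmul_eq_mul] at hsum

end

theorem add_one_mul_measure_orderStat_lt_le {n : ℕ} {Z : Fin (n + 1) → Ω → β}
    (hZ : Exchangeable P Z) (hZm : ∀ i, Measurable (Z i)) (hs : Measurable s)
    {k : ℕ} (hk₀ : 0 < k) (hkn : k ≤ n) :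
    (n + 1) *
        P {ω | orderStat (fun i : Fin n => s (Z i.castSucc ω)) k < s (Z (Fin.last n) ω)} ≤
      (n + 1 - k : ℕ) * P Set.univ := by
  have hmiss : {ω | orderStat (fun i : Fin n => s (Z i.castSucc ω)) k < s (Z (Fin.last n) ω)} =
      {ω | k ≤ strictRank (fun i => s (Z i ω)) (Fin.last n)} := by
    ext ω
    rw [Set.mem_ofPred_eq, Set.mem_ofPred_eq, strictRank_last, ← not_lt,
      ← le_orderStat_iff _ hk₀ hkn, not_le]
  rw [hmiss]
  simpa only [Fintype.card_fin, Nat.cast_add, Nat.cast_one] using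
    hZ.card_mul_measure_le_strictRank_le hZm hs k (Fin.last n)

end Exchangeable

/-- Split conformal prediction, canonical form (Proposition 1).  Let
`(X 1, Y 1), …, (X (n+1), Y (n+1))` be exchangeable random pairs with values in
`ℝ^d × ℝ`, let `ρ` be a measurable conformity function, `R i = ρ (X i) (Y i)` the
conformity scores, `0 < α < 1` with `⌈(1−α)(n+1)⌉ ≤ n`, and let `r̂` be the
`⌈(1−α)(n+1)⌉`-th order statistic of `R 1, …, R n`.  Then
`Pr(Y (n+1) ∈ C (X (n+1))) ≥ 1 − α`, where `C x = {y : ρ x y ≤ r̂}`. -/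
theorem split_conformal_marginal_validity {Ω : Type*} [MeasurableSpace Ω]
    (P : Measure Ω) [IsProbabilityMeasure P] (d n : ℕ)
    (X : Fin (n + 1) → Ω → (Fin d → ℝ)) (Y : Fin (n + 1) → Ω → ℝ)
    (hX : ∀ i, Measurable (X i)) (hY : ∀ i, Measurable (Y i))
    (hexch : ∀ π : Equiv.Perm (Fin (n + 1)),
      Measure.map (fun ω => fun i => (X (π i) ω, Y (π i) ω)) P =
        Measure.map (fun ω => fun i => (X i ω, Y i ω)) P)
    (ρ : (Fin d → ℝ) → ℝ → ℝ) (hρ : Measurable (Function.uncurry ρ))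
    (α : ℝ) (hα0 : 0 < α) (hα1 : α < 1)
    (hceil : ⌈(1 - α) * ((n : ℝ) + 1)⌉₊ ≤ n) :
    ENNReal.ofReal (1 - α) ≤
      P {ω | Y (Fin.last n) ω ∈
        {y : ℝ | ρ (X (Fin.last n) ω) y ≤
          orderStat (fun i : Fin n => ρ (X i.castSucc ω) (Y i.castSucc ω))
            ⌈(1 - α) * ((n : ℝ) + 1)⌉₊}} := by
  set k := ⌈(1 - α) * ((n : ℝ) + 1)⌉₊
  have hk₀ : 0 < k := Nat.ceil_pos.mpr (mul_pos (by linarith) (by positivity))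
  have hmiss := Exchangeable.add_one_mul_measure_orderStat_lt_le (s := Function.uncurry ρ)
    (Z := fun i ω => (X i ω, Y i ω)) hexch (fun i => (hX i).prodMk (hY i)) hρ hk₀ hceil
  rw [measure_univ, mul_one] at hmiss
  have hrate : ((n + 1 - k : ℕ) : ℝ≥0∞) ≤ (n + 1) * ENNReal.ofReal α := by
    have hceil_ge : (1 - α) * ((n : ℝ) + 1) ≤ k := Nat.le_ceil _
    rw [← ENNReal.ofReal_natCast, Nat.cast_sub (by omega),
      show ((n : ℝ≥0∞) + 1) = ENNReal.ofReal (n + 1) by norm_cast,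
      ← ENNReal.ofReal_mul (by positivity)]
    exact ENNReal.ofReal_le_ofReal (by push_cast; linarith)
  have hmiss_le := (ENNReal.mul_le_mul_iff_right (by simp) (by simp)).mp (hmiss.trans hrate)
  calc ENNReal.ofReal (1 - α) = 1 - ENNReal.ofReal α := by
        rw [ENNReal.ofReal_sub _ hα0.le, ENNReal.ofReal_one]
    _ ≤ 1 - P _ := tsub_le_tsub_left hmiss_le 1
    _ ≤ _ := by
        -- the miss event is the complement of the coverage event
        rw [tsub_le_iff_right, ← measure_univ (μ := P)]
        convert measure_univ_le_add_compl (μ := P) _ using 3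
        ext ω
        simp
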